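/- arXiv:math/0511353 — 3 statements merged into one kernel-verified Lean document; each statement's English description precedes it below -/
import Mathlib

section
/- Let X₁, X₂, X₃ be real Banach spaces and let i : X₁ → X₂ and j : X₂ → X₃ be injective continuous linear maps with ‖i u‖ ≤ ‖u‖ for all u ∈ X₁ and ‖j v‖ ≤ ‖v‖ for all v ∈ X₂ (comparable norms). Assume the norms of X₂ and X₃ are compatible, i.e., every sequence (vₙ) in X₂ that is Cauchy in X₂ and satisfies ‖j vₙ‖ → 0 also satisfies ‖vₙ‖ → 0. Then i is a compact operator if and only if both of the following hold: (a) the composite map j ∘ i : X₁ → X₃ is a compact operator, and (b) for every s ∈ (0,1) there exists a constant c(s) > 0 such that ‖i u‖ ≤ s‖u‖ + c(s)‖j (i u)‖ for all u ∈ X₁. -/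
/-!
If `i` is compact, the part of the closure of `i (closed unit ball)` where `‖y‖ ≥ s` is compact
and does not meet `ker j = 0`, so `‖j y‖` is bounded below there by some `m > 0`; on the unit
sphere this gives `‖i u‖ ≤ s + (‖i‖ + 1) / m * ‖j (i u)‖`, and homogeneity does the rest.
Conversely, on the unit ball the inequality gives `‖i u - i u'‖ ≤ 2 s + c ‖j (i u) - j (i u')‖`
with `s` arbitrarily small, so total boundedness passes from the image under `j ∘ i` to the image
under `i`, and completeness of `X₂` turns it into compactness of the closure.
-/

open Metric

section

variable {𝕜 E F G : Type*} [RCLike 𝕜]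
  [NormedAddCommGroup E] [NormedSpace 𝕜 E] [NormedAddCommGroup F] [NormedSpace 𝕜 F]
  [NormedAddCommGroup G] [NormedSpace 𝕜 G]

theorem ContinuousLinearMap.norm_le_add_mul_of_forall_norm_eq_one {T : E →L[𝕜] F}
    {L : E →L[𝕜] G} {s c : ℝ} (h : ∀ u, ‖u‖ = 1 → ‖T u‖ ≤ s + c * ‖L u‖) (u : E) :
    ‖T u‖ ≤ s * ‖u‖ + c * ‖L u‖ := by
  rcases eq_or_ne u 0 with rfl | hu
  · simp
  have hu' : 0 < ‖u‖ := norm_pos_iff.2 hu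
  have := h ((‖u‖⁻¹ : 𝕜) • u) (norm_smul_inv_norm hu)
  rw [map_smul, map_smul, norm_smul, norm_smul, norm_inv, RCLike.norm_ofReal,
    abs_of_pos hu'] at this
  field_simp at this
  linarith

theorem IsCompactOperator.exists_norm_le_add_mul {K : E →L[𝕜] F} {J : F →L[𝕜] G}
    (hK : IsCompactOperator K) (hJ : Function.Injective J) {s : ℝ} (hs : 0 < s) :
    ∃ c > 0, ∀ u, ‖K u‖ ≤ s * ‖u‖ + c * ‖J (K u)‖ := by
  set C := closure (K '' closedBall 0 1) ∩ {y | s ≤ ‖y‖}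
  have hC : IsCompact C := (hK.isCompact_closure_image_closedBall 1).inter_right
    (isClosed_le continuous_const continuous_norm)
  have hJC : ∀ y ∈ C, 0 < ‖J y‖ := fun y hy =>
    norm_pos_iff.2 ((map_ne_zero_iff J hJ).2 (norm_pos_iff.1 (hs.trans_le hy.2)))
  obtain ⟨m, hm, hmC⟩ := hC.exists_forall_le' J.continuous.norm.continuousOn hJC
  refine ⟨(‖K‖ + 1) / m, by positivity,
    ContinuousLinearMap.norm_le_add_mul_of_forall_norm_eq_one (L := J.comp K) fun u hu => ?_⟩
  rcases lt_or_ge ‖K u‖ s with hlt | hge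
  · linarith [mul_nonneg (by positivity : (0 : ℝ) ≤ (‖K‖ + 1) / m) (norm_nonneg ((J.comp K) u))]
  have hKu : K u ∈ C := ⟨subset_closure ⟨u, by simp [hu], rfl⟩, hge⟩
  calc ‖K u‖ ≤ ‖K‖ := by simpa [hu] using K.le_opNorm u
    _ ≤ (‖K‖ + 1) / m * ‖J (K u)‖ := by
        rw [div_mul_eq_mul_div, le_div_iff₀ hm]
        nlinarith [hmC _ hKu, norm_nonneg K]
    _ ≤ s + (‖K‖ + 1) / m * ‖(J.comp K) u‖ := le_add_of_nonneg_left hs.le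

end

theorem TotallyBounded.image_of_forall_dist_lt {α β γ : Type*} [PseudoMetricSpace β]
    [PseudoMetricSpace γ] {f : α → β} {g : α → γ} {s : Set α}
    (hg : TotallyBounded (g '' s))
    (hfg : ∀ ε > 0, ∃ δ > 0, ∀ a ∈ s, ∀ b ∈ s, dist (g a) (g b) < δ → dist (f a) (f b) < ε) :
    TotallyBounded (f '' s) := by
  refine totallyBounded_iff.2 fun ε hε => ?_
  obtain ⟨δ, hδ, hfg⟩ := hfg ε hε
  obtain ⟨t, hts, ht, hcover⟩ :=
    Set.exists_subset_image_finite_and.1 (finite_approx_of_totallyBounded hg δ hδ)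
  refine ⟨f '' t, ht.image f, ?_⟩
  rintro _ ⟨a, ha, rfl⟩
  obtain ⟨_, ⟨b, hb, rfl⟩, hab⟩ := Set.mem_iUnion₂.1 (hcover ⟨a, ha, rfl⟩)
  exact Set.mem_biUnion (Set.mem_image_of_mem f hb) (hfg a ha b (hts hb) hab)

section

variable {𝕜 E F G : Type*} [NontriviallyNormedField 𝕜]
  [NormedAddCommGroup E] [NormedSpace 𝕜 E] [NormedAddCommGroup F] [NormedSpace 𝕜 F]
  [NormedAddCommGroup G] [NormedSpace 𝕜 G]

theorem isCompactOperator_of_norm_le_add_mul [CompleteSpace F] {T : E →L[𝕜] F} {L : E →L[𝕜] G}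
    (hL : IsCompactOperator L) (hT : ∀ s > 0, ∃ c, ∀ u, ‖T u‖ ≤ s * ‖u‖ + c * ‖L u‖) :
    IsCompactOperator T := by
  refine (isCompactOperator_iff_isCompact_closure_image_closedBall (T : E →ₗ[𝕜] F) one_pos).2 <|
    (TotallyBounded.closure ?_).isCompact_of_isClosed isClosed_closure
  refine (hL.isCompact_closure_image_closedBall 1).totallyBounded.subset subset_closure
    |>.image_of_forall_dist_lt fun ε hε => ?_
  obtain ⟨c, hc⟩ := hT (ε / 4) (by positivity)
  refine ⟨ε / (2 * (|c| + 1)), by positivity, fun a ha b hb hab => ?_⟩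
  have hdiam : ‖a - b‖ ≤ 2 := by
    rw [mem_closedBall_zero_iff] at ha hb
    linarith [norm_sub_le a b]
  rw [dist_eq_norm, ← map_sub] at hab ⊢
  calc ‖T (a - b)‖ ≤ ε / 4 * ‖a - b‖ + c * ‖L (a - b)‖ := hc _
    _ ≤ ε / 4 * 2 + |c| * (ε / (2 * (|c| + 1))) := by
        gcongr
        exacts [le_abs_self c, hab.le]
    _ < ε := by
        have := abs_nonneg c
        field_simp
        nlinarith

end

theorem compact_embedding_iff_general
    {X₁ X₂ X₃ : Type*}
    [NormedAddCommGroup X₁] [NormedSpace ℝ X₁]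
    [NormedAddCommGroup X₂] [NormedSpace ℝ X₂] [CompleteSpace X₂]
    [NormedAddCommGroup X₃] [NormedSpace ℝ X₃]
    (i : X₁ →L[ℝ] X₂) (j : X₂ →L[ℝ] X₃)
    (hj_inj : Function.Injective j) :
    IsCompactOperator i ↔
      (IsCompactOperator (j.comp i) ∧
        ∀ s ∈ Set.Ioo (0 : ℝ) 1, ∃ c > 0, ∀ u : X₁,
          ‖i u‖ ≤ s * ‖u‖ + c * ‖j (i u)‖) := by
  refine ⟨fun hi => ⟨hi.clm_comp j, fun s hs => hi.exists_norm_le_add_mul hj_inj hs.1⟩,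
    fun ⟨hji, hb⟩ => isCompactOperator_of_norm_le_add_mul hji fun s hs => ?_⟩
  obtain ⟨c, -, hc⟩ :=
    hb (min s (1 / 2)) ⟨lt_min hs one_half_pos, min_lt_of_right_lt one_half_lt_one⟩
  exact ⟨c, fun u => (hc u).trans <|
    add_le_add_left (mul_le_mul_of_nonneg_right (min_le_left _ _) (norm_nonneg u)) _⟩

/-- **Theorem 1** (Ramm). For Banach spaces `X₁ ⊂ X₂ ⊂ X₃` with comparable norms
(modeled by injective continuous linear maps `i : X₁ → X₂`, `j : X₂ → X₃` with
`‖i u‖ ≤ ‖u‖`, `‖j v‖ ≤ ‖v‖`), and with the norms of `X₂` and `X₃` compatible,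
the embedding `i` is compact iff (a) `j ∘ i` is compact and
(b) `∀ s ∈ (0,1), ∃ c > 0, ‖i u‖ ≤ s‖u‖ + c‖j (i u)‖` for all `u`. -/
theorem compact_embedding_iff
    {X₁ X₂ X₃ : Type*}
    [NormedAddCommGroup X₁] [NormedSpace ℝ X₁] [CompleteSpace X₁]
    [NormedAddCommGroup X₂] [NormedSpace ℝ X₂] [CompleteSpace X₂]
    [NormedAddCommGroup X₃] [NormedSpace ℝ X₃] [CompleteSpace X₃]
    (i : X₁ →L[ℝ] X₂) (j : X₂ →L[ℝ] X₃)
    (hi_inj : Function.Injective i) (hj_inj : Function.Injective j)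
    (hi_norm : ∀ u : X₁, ‖i u‖ ≤ ‖u‖)
    (hj_norm : ∀ v : X₂, ‖j v‖ ≤ ‖v‖)
    (hcompat : ∀ v : ℕ → X₂, CauchySeq v →
      Filter.Tendsto (fun n => ‖j (v n)‖) Filter.atTop (nhds 0) →
      Filter.Tendsto (fun n => ‖v n‖) Filter.atTop (nhds 0)) :
    IsCompactOperator i ↔
      (IsCompactOperator (j.comp i) ∧
        ∀ s ∈ Set.Ioo (0 : ℝ) 1, ∃ c > 0, ∀ u : X₁,
          ‖i u‖ ≤ s * ‖u‖ + c * ‖j (i u)‖) :=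
  compact_embedding_iff_general i j hj_inj
end

section
/- Let X₁, X₂, X₃ be real Banach spaces and let i : X₁ → X₂ and j : X₂ → X₃ be continuous linear maps with ‖i u‖ ≤ ‖u‖ for all u ∈ X₁ and ‖j v‖ ≤ ‖v‖ for all v ∈ X₂. Assume (a) the composite j ∘ i : X₁ → X₃ is a compact operator, and (b) for every s ∈ (0,1) there exists a constant c(s) > 0 such that ‖i u‖ ≤ s‖u‖ + c(s)‖j (i u)‖ for all u ∈ X₁. Then i : X₁ → X₂ is a compact operator. (No compatibility of the norms of X₂ and X₃ is required for this direction.) -/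
/-! Given `ε > 0`, choose `s ≤ ε / 4` in (b). On the unit ball `B` of `X₁`, `‖u - v‖ < 2`, so
`‖i u - i v‖ < ε / 2 + c(s) ‖j (i u) - j (i v)‖`: points of the ball whose images under `j ∘ i`
are `ε / (2 c(s))`-close have `ε`-close images under `i`. A finite net for the totally bounded set
`(j ∘ i)(B)` therefore pulls back to a finite `ε`-net for `i(B)`, and a totally bounded set in the complete space `X₂`
is relatively compact. -/

open Metric Set

theorem TotallyBounded.image_of_dist_lt_of_dist_lt {α β γ : Type*}
    [PseudoMetricSpace β] [PseudoMetricSpace γ] {f : α → β} {g : α → γ} {S : Set α}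
    (hg : TotallyBounded (g '' S))
    (hfg : ∀ ε > 0, ∃ δ > 0, ∀ x ∈ S, ∀ y ∈ S, dist (g x) (g y) < δ → dist (f x) (f y) < ε) :
    TotallyBounded (f '' S) := by
  refine totallyBounded_iff.2 fun ε hε => ?_
  obtain ⟨δ, hδ, hfδ⟩ := hfg ε hε
  obtain ⟨t, htS, htfin, hcover⟩ :=
    exists_subset_image_finite_and.1 (finite_approx_of_totallyBounded hg δ hδ)
  refine ⟨f '' t, htfin.image f, ?_⟩
  rintro _ ⟨x, hx, rfl⟩
  obtain ⟨_, ⟨y, hy, rfl⟩, hxy⟩ := mem_iUnion₂.1 (hcover ⟨x, hx, rfl⟩)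
  exact mem_iUnion₂.2 ⟨f y, mem_image_of_mem f hy, hfδ x hx y (htS hy) hxy⟩

section

variable {E F G : Type*} [SeminormedAddCommGroup E] [NormedSpace ℝ E]
  [SeminormedAddCommGroup F] [NormedSpace ℝ F] [SeminormedAddCommGroup G] [NormedSpace ℝ G]

theorem ContinuousLinearMap.dist_lt_of_dist_comp_lt_of_mem_ball {i : E →L[ℝ] F} {j : F →L[ℝ] G}
    (hb : ∀ s ∈ Ioo (0 : ℝ) 1, ∃ c > 0, ∀ u : E, ‖i u‖ ≤ s * ‖u‖ + c * ‖j (i u)‖)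
    {ε : ℝ} (hε : 0 < ε) :
    ∃ δ > 0, ∀ u ∈ ball (0 : E) 1, ∀ v ∈ ball (0 : E) 1,
      dist (j (i u)) (j (i v)) < δ → dist (i u) (i v) < ε := by
  set s := min (ε / 4) (1 / 2)
  have hs : s ∈ Ioo (0 : ℝ) 1 :=
    ⟨lt_min (by positivity) (by norm_num), (min_le_right _ _).trans_lt (by norm_num)⟩
  obtain ⟨c, hc, hic⟩ := hb s hs
  refine ⟨ε / (2 * c), by positivity, fun u hu v hv hjuv => ?_⟩
  have huv : ‖u - v‖ < 2 := by
    rw [mem_ball_zero_iff] at hu hv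
    linarith [norm_sub_le u v]
  rw [dist_eq_norm, ← map_sub, ← map_sub] at hjuv
  calc dist (i u) (i v) = ‖i (u - v)‖ := by rw [dist_eq_norm, map_sub]
    _ ≤ s * ‖u - v‖ + c * ‖j (i (u - v))‖ := hic (u - v)
    _ ≤ ε / 4 * 2 + c * ‖j (i (u - v))‖ := by gcongr; exact min_le_left _ _
    _ < ε / 4 * 2 + c * (ε / (2 * c)) := by gcongr
    _ = ε := by field_simp; ring

end

theorem compact_embedding_of_conditions_general
    {X₁ X₂ X₃ : Type*}
    [NormedAddCommGroup X₁] [NormedSpace ℝ X₁]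
    [NormedAddCommGroup X₂] [NormedSpace ℝ X₂] [CompleteSpace X₂]
    [NormedAddCommGroup X₃] [NormedSpace ℝ X₃]
    (i : X₁ →L[ℝ] X₂) (j : X₂ →L[ℝ] X₃)
    (ha : IsCompactOperator (j.comp i))
    (hb : ∀ s ∈ Set.Ioo (0 : ℝ) 1, ∃ c > 0, ∀ u : X₁,
      ‖i u‖ ≤ s * ‖u‖ + c * ‖j (i u)‖) :
    IsCompactOperator i := by
  have hji : TotallyBounded ((j.comp i) '' ball 0 1) :=
    (ha.isCompact_closure_image_ball 1).totallyBounded.subset subset_closure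
  have hi : TotallyBounded (i '' ball 0 1) :=
    hji.image_of_dist_lt_of_dist_lt fun _ hε => i.dist_lt_of_dist_comp_lt_of_mem_ball hb hε
  exact (isCompactOperator_iff_isCompact_closure_image_ball (i : X₁ →ₗ[ℝ] X₂) one_pos).2
    (hi.closure.isCompact_of_isClosed isClosed_closure)

/-- Sufficiency part of Theorem 1: conditions (a) and (b) imply that the
embedding `i : X₁ → X₂` is compact (no compatibility of norms needed). -/
theorem compact_embedding_of_conditions
    {X₁ X₂ X₃ : Type*}
    [NormedAddCommGroup X₁] [NormedSpace ℝ X₁] [CompleteSpace X₁]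
    [NormedAddCommGroup X₂] [NormedSpace ℝ X₂] [CompleteSpace X₂]
    [NormedAddCommGroup X₃] [NormedSpace ℝ X₃] [CompleteSpace X₃]
    (i : X₁ →L[ℝ] X₂) (j : X₂ →L[ℝ] X₃)
    (hi_norm : ∀ u : X₁, ‖i u‖ ≤ ‖u‖)
    (hj_norm : ∀ v : X₂, ‖j v‖ ≤ ‖v‖)
    (ha : IsCompactOperator (j.comp i))
    (hb : ∀ s ∈ Set.Ioo (0 : ℝ) 1, ∃ c > 0, ∀ u : X₁,
      ‖i u‖ ≤ s * ‖u‖ + c * ‖j (i u)‖) :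
    IsCompactOperator i :=
  compact_embedding_of_conditions_general i j ha hb
end

section
/- Let X₁, X₂, X₃ be real Banach spaces and let i : X₁ → X₂ and j : X₂ → X₃ be injective continuous linear maps with ‖i u‖ ≤ ‖u‖ for all u ∈ X₁ and ‖j v‖ ≤ ‖v‖ for all v ∈ X₂. Assume the norms of X₂ and X₃ are compatible, i.e., every sequence (vₙ) in X₂ that is Cauchy in X₂ and satisfies ‖j vₙ‖ → 0 also satisfies ‖vₙ‖ → 0. If i : X₁ → X₂ is a compact operator, then for every s ∈ (0,1) there exists a constant c(s) > 0 such that ‖i u‖ ≤ s‖u‖ + c(s)‖j (i u)‖ for all u ∈ X₁. -/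
/-! The inequality is homogeneous in `u`, so a failure for `s` would produce unit vectors `wₙ` with
`s + (n + 1) ‖j (i wₙ)‖ < ‖i wₙ‖ ≤ ‖i‖`. Then `j (i wₙ) → 0`, and compactness of `i` gives
a subsequence along which `i wₙ` converges, hence is Cauchy. Compatibility of the norms forces
`i wₙ → 0` along it, contradicting `‖i wₙ‖ > s > 0`. -/

open Filter Topology

theorem tendsto_nhds_zero_of_succ_mul_le {a : ℕ → ℝ} {B : ℝ} (h0 : ∀ n, 0 ≤ a n)
    (h : ∀ n, (n + 1) * a n ≤ B) : Tendsto a atTop (𝓝 0) := by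
  refine squeeze_zero h0 (fun n => (le_div_iff₀' (by positivity)).2 (h n)) ?_
  simpa only [mul_one_div, mul_zero] using tendsto_one_div_add_atTop_nhds_zero_nat.const_mul B

theorem IsCompactOperator.tendsto_subseq {𝕜 E F : Type*} [NontriviallyNormedField 𝕜]
    [NormedAddCommGroup E] [NormedSpace 𝕜 E] [NormedAddCommGroup F] [NormedSpace 𝕜 F]
    {f : E →L[𝕜] F} (hf : IsCompactOperator f) {u : ℕ → E}
    (hu : Bornology.IsBounded (Set.range u)) :
    ∃ a : F, ∃ φ : ℕ → ℕ, StrictMono φ ∧ Tendsto (f ∘ u ∘ φ) atTop (𝓝 a) := by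
  obtain ⟨K, hK, hfK⟩ := hf.image_subset_compact_of_bounded (f := (f : E →ₗ[𝕜] F)) hu
  obtain ⟨a, -, φ, hφ, hlim⟩ := hK.tendsto_subseq fun n => hfK ⟨u n, ⟨n, rfl⟩, rfl⟩
  exact ⟨a, φ, hφ, hlim⟩

theorem norm_le_mul_norm_add_of_norm_eq_one {E F G : Type*} [NormedAddCommGroup E]
    [NormedSpace ℝ E] [NormedAddCommGroup F] [NormedSpace ℝ F] [NormedAddCommGroup G]
    [NormedSpace ℝ G] {T : E →L[ℝ] F} {j : F →L[ℝ] G} {s c : ℝ}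
    (h : ∀ w, ‖w‖ = 1 → ‖T w‖ ≤ s + c * ‖j (T w)‖) (u : E) :
    ‖T u‖ ≤ s * ‖u‖ + c * ‖j (T u)‖ := by
  rcases eq_or_ne u 0 with rfl | hu
  · simp
  have hpos : 0 < ‖u‖ := norm_pos_iff.2 hu
  have hunit := h (‖u‖⁻¹ • u) (norm_smul_inv_norm hu)
  simp only [map_smul, norm_smul, norm_inv, norm_norm] at hunit
  calc ‖T u‖ = ‖u‖ * (‖u‖⁻¹ * ‖T u‖) := by field_simp
    _ ≤ ‖u‖ * (s + c * (‖u‖⁻¹ * ‖j (T u)‖)) := by gcongr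
    _ = s * ‖u‖ + c * ‖j (T u)‖ := by field_simp

theorem interpolation_inequality_of_compact_general
    {X₁ X₂ X₃ : Type*}
    [NormedAddCommGroup X₁] [NormedSpace ℝ X₁]
    [NormedAddCommGroup X₂] [NormedSpace ℝ X₂]
    [NormedAddCommGroup X₃] [NormedSpace ℝ X₃]
    (i : X₁ →L[ℝ] X₂) (j : X₂ →L[ℝ] X₃)
    (hcompat : ∀ v : ℕ → X₂, CauchySeq v →
      Filter.Tendsto (fun n => ‖j (v n)‖) Filter.atTop (nhds 0) →
      Filter.Tendsto (fun n => ‖v n‖) Filter.atTop (nhds 0))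
    (hcompact : IsCompactOperator i) :
    ∀ s ∈ Set.Ioo (0 : ℝ) 1, ∃ c > 0, ∀ u : X₁,
      ‖i u‖ ≤ s * ‖u‖ + c * ‖j (i u)‖ := by
  rintro s ⟨hs, -⟩
  by_contra! hfail
  have hbad : ∀ n : ℕ, ∃ w : X₁, ‖w‖ = 1 ∧ s + (n + 1) * ‖j (i w)‖ < ‖i w‖ := by
    intro n
    by_contra! hgood
    obtain ⟨u, hu⟩ := hfail (n + 1) (by positivity)
    exact hu.not_ge (norm_le_mul_norm_add_of_norm_eq_one hgood u)
  choose w hw_norm hw using hbad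
  have hjw : Tendsto (fun n => ‖j (i (w n))‖) atTop (𝓝 0) := by
    refine tendsto_nhds_zero_of_succ_mul_le (fun n => norm_nonneg _) (B := ‖i‖) fun n => ?_
    have hiw_le : ‖i (w n)‖ ≤ ‖i‖ := by simpa [hw_norm] using i.le_opNorm (w n)
    linarith [hw n]
  have hw_bdd : Bornology.IsBounded (Set.range w) :=
    isBounded_iff_forall_norm_le.2 ⟨1, by rintro _ ⟨n, rfl⟩; exact (hw_norm n).le⟩
  obtain ⟨a, φ, hφ, hlim⟩ := hcompact.tendsto_subseq hw_bdd
  have hiw := hcompat _ hlim.cauchySeq (hjw.comp hφ.tendsto_atTop)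
  have hs_le : s ≤ 0 := ge_of_tendsto' hiw fun n =>
    (le_add_of_nonneg_right (by positivity)).trans (hw (φ n)).le
  exact hs_le.not_gt hs

/-- Necessity of condition (b) in Theorem 1: if the norms of `X₂` and `X₃` are
compatible and the embedding `i : X₁ → X₂` is compact, then for every
`s ∈ (0,1)` there is `c > 0` with `‖i u‖ ≤ s‖u‖ + c‖j (i u)‖` for all `u`. -/
theorem interpolation_inequality_of_compact
    {X₁ X₂ X₃ : Type*}
    [NormedAddCommGroup X₁] [NormedSpace ℝ X₁] [CompleteSpace X₁]
    [NormedAddCommGroup X₂] [NormedSpace ℝ X₂] [CompleteSpace X₂]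
    [NormedAddCommGroup X₃] [NormedSpace ℝ X₃] [CompleteSpace X₃]
    (i : X₁ →L[ℝ] X₂) (j : X₂ →L[ℝ] X₃)
    (hi_inj : Function.Injective i) (hj_inj : Function.Injective j)
    (hi_norm : ∀ u : X₁, ‖i u‖ ≤ ‖u‖)
    (hj_norm : ∀ v : X₂, ‖j v‖ ≤ ‖v‖)
    (hcompat : ∀ v : ℕ → X₂, CauchySeq v →
      Filter.Tendsto (fun n => ‖j (v n)‖) Filter.atTop (nhds 0) →
      Filter.Tendsto (fun n => ‖v n‖) Filter.atTop (nhds 0))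
    (hcompact : IsCompactOperator i) :
    ∀ s ∈ Set.Ioo (0 : ℝ) 1, ∃ c > 0, ∀ u : X₁,
      ‖i u‖ ≤ s * ‖u‖ + c * ‖j (i u)‖ :=
  interpolation_inequality_of_compact_general i j hcompat hcompact
end
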